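/- arXiv:2110.06026 — 3 statements merged into one kernel-verified Lean document; each statement's English description precedes it below -/
import Mathlib

section
/- If X is an ω^3-large finite set of natural numbers, then |X| > exp^{min X}(min X), where exp(x) = 2^x and exp^{n+1}(x) = exp(exp^n(x)). -/
open Finset

/-- Minimum of a finite set of naturals (0 for the empty set). -/
def fmin (X : Finset ℕ) : ℕ := WithTop.untopD 0 X.min

/-- Maximum of a finite set of naturals (0 for the empty set). -/
def fmax (X : Finset ℕ) : ℕ := WithBot.unbotD 0 X.max

/-- `OmegaLarge d X` : `X` is ω^d-large (for `d ≥ 1`; `OmegaLarge 0` means nonempty).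
`X` is ω^{d+1}-large iff `X = {min X} ∪ ⋃_{m < min X} X_m` where the `X_m` form a
stack (each max below the next min) of ω^d-large sets all above `min X`. -/
def OmegaLarge : ℕ → Finset ℕ → Prop
  | 0, X => X.Nonempty
  | d+1, X => X.Nonempty ∧ ∃ f : ℕ → Finset ℕ,
      (∀ m < fmin X, OmegaLarge d (f m)) ∧
      (∀ m, m + 1 < fmin X → fmax (f m) < fmin (f (m+1))) ∧
      (∀ m < fmin X, fmin X < fmin (f m)) ∧
      X = insert (fmin X) ((Finset.range (fmin X)).biUnion f)

/-- `OmegaMulLarge d n X` : `X` is ω^d·n-large, i.e. a union of a stack of `n`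
ω^d-large sets. -/
def OmegaMulLarge (d n : ℕ) (X : Finset ℕ) : Prop :=
  ∃ f : ℕ → Finset ℕ,
    (∀ m < n, OmegaLarge d (f m)) ∧
    (∀ m, m + 1 < n → fmax (f m) < fmin (f (m+1))) ∧
    X = (Finset.range n).biUnion f

/-- A (finite) binary tree: a set of binary strings closed under initial segments. -/
def IsTree (T : Finset (List Bool)) : Prop :=
  ∀ σ ∈ T, ∀ τ : List Bool, τ <+: σ → τ ∈ T

/-- `level T x` is `T ∩ 2^x`, the set of strings in `T` of length `x`. -/
def level (T : Finset (List Bool)) (x : ℕ) : Finset (List Bool) :=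
  T.filter (fun σ => σ.length = x)

/-- Two strings are compatible if one is an initial segment of the other. -/
def Compat (σ τ : List Bool) : Prop := σ <+: τ ∨ τ <+: σ

instance (σ τ : List Bool) : Decidable (Compat σ τ) := by
  unfold Compat; infer_instance

/-- `T_ρ` : the elements of `T` compatible with `ρ`. -/
def Tsub (T : Finset (List Bool)) (ρ : List Bool) : Finset (List Bool) :=
  T.filter (fun σ => Compat σ ρ)

/-- `x` and `z` are consecutive elements of `X`. -/
def Consec (X : Finset ℕ) (x z : ℕ) : Prop :=
  x ∈ X ∧ z ∈ X ∧ x < z ∧ ∀ y ∈ X, y ≤ x ∨ z ≤ y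

/-- `T` is `X`-quasistrong: `T` is a tree meeting every level in `X`, and every
node at a level of `X` has exactly two (necessarily incompatible) extensions at
the next level of `X`. -/
def QuasiStrong (X : Finset ℕ) (T : Finset (List Bool)) : Prop :=
  IsTree T ∧ (∀ x ∈ X, (level T x).Nonempty) ∧
  ∀ x z, Consec X x z → ∀ σ ∈ level T x,
    ((level T z).filter (fun τ => σ <+: τ)).card = 2

/-- `σ` is a leaf (maximal element) of `S`. -/
def IsLeaf (S : Finset (List Bool)) (σ : List Bool) : Prop :=
  σ ∈ S ∧ ∀ τ ∈ S, σ <+: τ → τ = σ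

/-- `S` is `(C,Y)`-prehomogeneous for color `c`. -/
def PrehomFor (C : List Bool → ℕ) (Y : Finset ℕ) (S : Finset (List Bool)) (c : ℕ) : Prop :=
  ∀ x z, Consec Y x z → ∀ σ ∈ level S x, ∀ τ ∈ level S z, σ <+: τ →
    ∃ ζ ∈ S, σ <+: ζ ∧ ζ <+: τ ∧ C ζ = c

/-- `S` is `(C,Y)`-prehomogeneous (for some color). -/
def Prehom (C : List Bool → ℕ) (Y : Finset ℕ) (S : Finset (List Bool)) : Prop :=
  ∃ c, PrehomFor C Y S c

/-- The main clause of persistence: for every `X`-quasistrong tree `T` and every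
`k`-coloring `C` of the leaves `T ∩ 2^{max X}`, there are a color `c < k` and a
`Y`-quasistrong subtree `S ⊆ T` each of whose leaves has an extension in `C⁻¹(c)`. -/
def PersClause (k : ℕ) (X Y : Finset ℕ) : Prop :=
  ∀ T : Finset (List Bool), QuasiStrong X T →
    ∀ C : List Bool → ℕ, (∀ σ ∈ level T (fmax X), C σ < k) →
      ∃ c < k, ∃ S ⊆ T, QuasiStrong Y S ∧
        ∀ σ, IsLeaf S σ → ∃ τ ∈ level T (fmax X), σ <+: τ ∧ C τ = c

/-- `Persistent d n k i X` : `X` is `(ω^d·n, k, i)`-persistent. -/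
def Persistent (d n k : ℕ) : ℕ → Finset ℕ → Prop
  | 0, X => OmegaMulLarge d n X
  | i+1, X => ∃ Y, Y ⊆ X ∧ Persistent d n k i Y ∧ PersClause k X Y

/-- `SuperPersistent d n k i X` : `X` is `(ω^d·n, k, i)`-superpersistent. -/
def SuperPersistent (d n k i : ℕ) (X : Finset ℕ) : Prop :=
  ∀ T : List Bool → Finset (List Bool),
    (∀ ρ : List Bool, ρ.length = fmin X →
      QuasiStrong X (T ρ) ∧ ∀ σ ∈ T ρ, Compat σ ρ) →
    ∀ C : List Bool → ℕ, (∀ σ, C σ < k) →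
      ∃ Y ⊆ X, Persistent d n k i Y ∧
        ∀ ρ : List Bool, ρ.length = fmin X →
          ∃ S ⊆ T ρ, QuasiStrong Y S ∧ Prehom C Y S

/-- `eOf δ` : the least integer `e` with `2^{-e} < δ`. -/
noncomputable def eOf (δ : ℚ) : ℕ := sInf {e : ℕ | (2:ℚ) ^ (-(e:ℤ)) < δ}

/-- The Kučera–Gács coding bound `g(m,δ) = (m-1)e + m(m-1)/2`. -/
noncomputable def gKG (m : ℕ) (δ : ℚ) : ℕ := (m-1) * eOf δ + m*(m-1)/2

/-- `ḡ(x,k,i)`: iterated Kučera–Gács bound. -/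
noncomputable def gbar (x k : ℕ) : ℕ → ℕ
  | 0 => x + k + 1
  | i+1 => gKG (gbar x k i) (1/(k:ℚ))

/-- `h(ℓ,m,δ) = 2^{eℓ·2^{5m}}` where `e` is least with `2^{-e} < δ`. -/
noncomputable def hFun (l m : ℕ) (δ : ℚ) : ℕ := 2 ^ (eOf δ * l * 2 ^ (5*m))

/-- `h̄(x,n,k) = h(2^x, n, 1/k)·k^{2^x}`. -/
noncomputable def hbar (x n k : ℕ) : ℕ := hFun (2^x) n (1/(k:ℚ)) * k^(2^x)

/-- `expIter n x = exp^n(x)` where `exp(x) = 2^x`. -/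
def expIter : ℕ → ℕ → ℕ
  | 0, x => x
  | n+1, x => 2 ^ (expIter n x)

/-!
An ω^{d+1}-large set with minimum `a` is `{a}` followed by a stack of `a` ω^d-large blocks, each
block starting above the maximum of the previous one. Hence, if every ω^d-large `Z` has
`F (min Z) ≤ max Z` for a monotone `F`, the `i`-th block starts at or above `F^[i] (a + 1)`.
At level ω one has `max Z ≥ 2 min Z`; iterating doubling gives `|Z| > 2 ^ min Z` at level ω^2,
and iterating `2 ^ ·` gives `|X| > exp^a(a)` at level ω^3.
-/

lemma fmin_eq_min' {X : Finset ℕ} (h : X.Nonempty) : fmin X = X.min' h := by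
  rw [fmin, ← Finset.coe_min' h, WithTop.untopD_coe]

lemma fmax_eq_max' {X : Finset ℕ} (h : X.Nonempty) : fmax X = X.max' h := by
  rw [fmax, ← Finset.coe_max' h, WithBot.unbotD_coe]

lemma fmin_le {X : Finset ℕ} {x : ℕ} (hx : x ∈ X) : fmin X ≤ x := by
  rw [fmin_eq_min' ⟨x, hx⟩]
  exact X.min'_le x hx

lemma le_fmax {X : Finset ℕ} {x : ℕ} (hx : x ∈ X) : x ≤ fmax X := by
  rw [fmax_eq_max' ⟨x, hx⟩]
  exact X.le_max' x hx

lemma fmin_mem {X : Finset ℕ} (h : X.Nonempty) : fmin X ∈ X := by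
  rw [fmin_eq_min' h]
  exact X.min'_mem h

lemma fmin_le_fmax {X : Finset ℕ} (h : X.Nonempty) : fmin X ≤ fmax X :=
  le_fmax (fmin_mem h)

lemma card_add_fmin_le_fmax_add_one {X : Finset ℕ} (h : X.Nonempty) :
    X.card + fmin X ≤ fmax X + 1 := by
  have hsub : X ⊆ Finset.Icc (fmin X) (fmax X) := fun x hx =>
    Finset.mem_Icc.mpr ⟨fmin_le hx, le_fmax hx⟩
  have hcard := Finset.card_le_card hsub
  rw [Nat.card_Icc] at hcard
  have := fmin_le_fmax h
  omega

lemma expIter_eq_iterate (n x : ℕ) : expIter n x = (2 ^ ·)^[n] x := by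
  induction n with
  | zero => rfl
  | succ n ih => rw [Function.iterate_succ_apply', ← ih]; rfl

namespace OmegaLarge

variable {d : ℕ} {X : Finset ℕ}

lemma nonempty (hX : OmegaLarge d X) : X.Nonempty := by
  cases d with
  | zero => exact hX
  | succ d => exact hX.1

lemma exists_blocks (hX : OmegaLarge (d + 1) X) :
    ∃ f : ℕ → Finset ℕ,
      (∀ m < fmin X, OmegaLarge d (f m) ∧ f m ⊆ X.erase (fmin X)) ∧
      (∀ m, m + 1 < fmin X → fmax (f m) < fmin (f (m + 1))) ∧
      (∀ m < fmin X, fmin X < fmin (f m)) := by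
  obtain ⟨-, f, hf, hst, hmin, hdec⟩ := hX
  refine ⟨f, fun m hm => ⟨hf m hm, fun x hx => Finset.mem_erase.mpr ⟨?_, ?_⟩⟩, hst, hmin⟩
  · exact ((hmin m hm).trans_le (fmin_le hx)).ne'
  · rw [hdec]
    exact Finset.mem_insert_of_mem (Finset.mem_biUnion.mpr ⟨m, Finset.mem_range.mpr hm, hx⟩)

lemma fmin_lt_card (hX : OmegaLarge (d + 1) X) : fmin X < X.card := by
  obtain ⟨f, hf, hst, -⟩ := hX.exists_blocks
  have hne : ∀ m < fmin X, (f m).Nonempty := fun m hm => (hf m hm).1.nonempty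
  have hmono : StrictMonoOn (fun m => fmin (f m)) (Set.Iio (fmin X)) := by
    refine strictMonoOn_of_lt_succ Set.ordConnected_Iio fun m _ hm hm1 => ?_
    rw [Order.succ_eq_add_one] at hm1 ⊢
    exact (fmin_le_fmax (hne m hm)).trans_lt (hst m hm1)
  have hcard : (Finset.range (fmin X)).card ≤ (X.erase (fmin X)).card := by
    refine Finset.card_le_card_of_injOn (fun m => fmin (f m)) (fun m hm => ?_) ?_
    · exact (hf m (Finset.mem_range.mp hm)).2 (fmin_mem (hne m (Finset.mem_range.mp hm)))
    · simpa only [Finset.coe_range] using hmono.injOn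
  rw [Finset.card_range, Finset.card_erase_of_mem (fmin_mem hX.nonempty)] at hcard
  have := hX.nonempty.card_pos
  omega

lemma exists_block_iterate_le_fmin (hX : OmegaLarge (d + 1) X) {F : ℕ → ℕ} (hF : Monotone F)
    (hFZ : ∀ Z, OmegaLarge d Z → fmin X < fmin Z → F (fmin Z) ≤ fmax Z) (ha : 0 < fmin X) :
    ∃ Z, OmegaLarge d Z ∧ Z.card < X.card ∧ fmin X < fmin Z ∧
      F^[fmin X - 1] (fmin X + 1) ≤ fmin Z := by
  obtain ⟨f, hf, hst, hmin⟩ := hX.exists_blocks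
  have hgrow : ∀ i < fmin X, F^[i] (fmin X + 1) ≤ fmin (f i) := by
    intro i
    induction i with
    | zero => exact hmin 0
    | succ i ih =>
      intro hi
      rw [Function.iterate_succ_apply']
      calc F (F^[i] (fmin X + 1)) ≤ F (fmin (f i)) := hF (ih (by omega))
        _ ≤ fmax (f i) := hFZ _ (hf i (by omega)).1 (hmin i (by omega))
        _ ≤ fmin (f (i + 1)) := (hst i hi).le
  have hlast : fmin X - 1 < fmin X := by omega
  refine ⟨f (fmin X - 1), (hf _ hlast).1, ?_, hmin _ hlast, hgrow _ hlast⟩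
  exact (Finset.card_le_card (hf _ hlast).2).trans_lt
    (Finset.card_erase_lt_of_mem (fmin_mem hX.nonempty))

lemma two_mul_fmin_le_fmax (hX : OmegaLarge (d + 1) X) : 2 * fmin X ≤ fmax X := by
  have := hX.fmin_lt_card
  have := card_add_fmin_le_fmax_add_one hX.nonempty
  omega

lemma two_pow_fmin_lt_card (hX : OmegaLarge (d + 2) X) (ha : 0 < fmin X) :
    2 ^ fmin X < X.card := by
  obtain ⟨Z, hZ, hZX, -, hZmin⟩ := hX.exists_block_iterate_le_fmin (F := (2 * ·))
    (fun _ _ h => Nat.mul_le_mul_left 2 h) (fun _ hZ _ => hZ.two_mul_fmin_le_fmax) ha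
  rw [mul_left_iterate_apply] at hZmin
  calc 2 ^ fmin X = 2 ^ (fmin X - 1) * 2 := by rw [← pow_succ, Nat.sub_add_cancel ha]
    _ ≤ 2 ^ (fmin X - 1) * (fmin X + 1) := Nat.mul_le_mul_left _ (by omega)
    _ ≤ fmin Z := hZmin
    _ < Z.card := hZ.fmin_lt_card
    _ < X.card := hZX

lemma two_pow_fmin_le_fmax (hX : OmegaLarge (d + 2) X) (ha : 0 < fmin X) :
    2 ^ fmin X ≤ fmax X := by
  have := hX.two_pow_fmin_lt_card ha
  have := card_add_fmin_le_fmax_add_one hX.nonempty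
  omega

lemma expIter_fmin_lt_card (hX : OmegaLarge (d + 3) X) : expIter (fmin X) (fmin X) < X.card := by
  rcases Nat.eq_zero_or_pos (fmin X) with ha | ha
  · rw [ha]
    exact hX.nonempty.card_pos
  have hpow : Monotone (2 ^ · : ℕ → ℕ) := pow_right_mono₀ one_le_two
  obtain ⟨Z, hZ, hZX, hXZ, hZmin⟩ := hX.exists_block_iterate_le_fmin hpow
    (fun _ hZ hXZ => hZ.two_pow_fmin_le_fmax (by omega)) ha
  calc expIter (fmin X) (fmin X) ≤ (2 ^ ·)^[fmin X] (fmin X + 1) := by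
        rw [expIter_eq_iterate]
        exact hpow.iterate _ (Nat.le_succ _)
    _ = 2 ^ (2 ^ ·)^[fmin X - 1] (fmin X + 1) := by
        rw [← Function.iterate_succ_apply' (2 ^ · : ℕ → ℕ), Nat.succ_eq_add_one,
          Nat.sub_add_cancel ha]
    _ ≤ 2 ^ fmin Z := hpow hZmin
    _ < Z.card := hZ.two_pow_fmin_lt_card (by omega)
    _ < X.card := hZX

end OmegaLarge

/-- If `X` is ω^3-large then `|X| > exp^{min X}(min X)`. -/
theorem stmt1 (X : Finset ℕ) (hX : OmegaLarge 3 X) :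
    expIter (fmin X) (fmin X) < X.card :=
  OmegaLarge.expIter_fmin_lt_card (d := 0) hX
end

section
/- Define ḡ(x, k, 0) = x + k + 1 and ḡ(x, k, i+1) = g(ḡ(x, k, i), 1/k), where g(m, δ) = (m−1)·e + m(m−1)/2 with e the least integer such that 2^{−e} < δ. Then for all i ≥ 0 and all x ≥ k > 0, ḡ(x, k, i) ≤ (x + k + i + 1)^{2^i}. -/
open Finset

/-! Since `2^{-k} < 1/k` we have `e ≤ k`, and `g(m, δ) ≤ M²` as soon as `m ≤ M` and `2e ≤ M`.
With `x ≥ k` the base `x + k + i + 1` is at least `2k ≥ 2e`, so each step of the recursion at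
most squares the bound. -/

theorem eOf_le_of_zpow_lt {δ : ℚ} {n : ℕ} (h : (2:ℚ) ^ (-(n:ℤ)) < δ) : eOf δ ≤ n :=
  Nat.sInf_le h

theorem eOf_one_div_natCast_le (k : ℕ) : eOf (1 / (k:ℚ)) ≤ k := by
  rcases Nat.eq_zero_or_pos k with rfl | hk
  · -- `1 / 0 = 0`, so the defining set is empty and `sInf ∅ = 0`.
    simp [eOf, zpow_neg, pow_pos, not_lt_of_gt]
  · apply eOf_le_of_zpow_lt
    rw [zpow_neg, zpow_natCast, ← one_div]
    exact one_div_lt_one_div_of_lt (by exact_mod_cast hk) (by exact_mod_cast Nat.lt_two_pow_self)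

theorem gKG_le_sq {m M : ℕ} {δ : ℚ} (hm : m ≤ M) (he : 2 * eOf δ ≤ M) : gKG m δ ≤ M ^ 2 := by
  have hlin : 2 * ((m - 1) * eOf δ) ≤ M * M :=
    calc 2 * ((m - 1) * eOf δ) ≤ m * (2 * eOf δ) := by
          rw [mul_left_comm]; exact Nat.mul_le_mul_right _ (Nat.sub_le m 1)
      _ ≤ M * M := Nat.mul_le_mul hm he
  have hquad : 2 * (m * (m - 1) / 2) ≤ M * M :=
    calc 2 * (m * (m - 1) / 2) ≤ m * (m - 1) := Nat.mul_div_le _ 2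
      _ ≤ M * M := Nat.mul_le_mul hm ((Nat.sub_le m 1).trans hm)
  rw [gKG, sq]
  omega

theorem stmt9_general (i x k : ℕ) (hxk : k ≤ x) :
    gbar x k i ≤ (x + k + i + 1) ^ (2^i) := by
  induction i with
  | zero => simp [gbar]
  | succ i ih =>
    set A := x + k + i + 1
    have he : 2 * eOf (1 / (k:ℚ)) ≤ A ^ 2 ^ i :=
      calc 2 * eOf (1 / (k:ℚ)) ≤ 2 * k := Nat.mul_le_mul_left 2 (eOf_one_div_natCast_le k)
        _ ≤ A := by omega
        _ ≤ A ^ 2 ^ i := Nat.le_self_pow (Nat.two_pow_pos i).ne' A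
    calc gbar x k (i + 1) ≤ (A ^ 2 ^ i) ^ 2 := gKG_le_sq ih he
      _ = A ^ 2 ^ (i + 1) := by rw [← pow_mul, pow_succ]
      _ ≤ (x + k + (i + 1) + 1) ^ 2 ^ (i + 1) := Nat.pow_le_pow_left (by omega) _

/-- The arithmetic bound `ḡ(x,k,i) ≤ (x+k+i+1)^{2^i}` for `x ≥ k > 0`. -/
theorem stmt9 (i x k : ℕ) (hk : 0 < k) (hxk : k ≤ x) :
    gbar x k i ≤ (x + k + i + 1) ^ (2^i) :=
  stmt9_general i x k hxk
end

section
/- Suppose d > 0, X is ω^{2d+1}-large, and min X > max{k, i, 2}. Then X is (ω^d, k, i)-persistent. -/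
open Finset

lemma fmax_mem {X : Finset ℕ} (h : X.Nonempty) : fmax X ∈ X :=
  fmax_eq_max' h ▸ X.max'_mem h

lemma fmin_le_fmin {X Y : Finset ℕ} (hYX : Y ⊆ X) (hY : Y.Nonempty) : fmin X ≤ fmin Y :=
  fmin_le (hYX (fmin_mem hY))

lemma fmax_le_fmax {X Y : Finset ℕ} (hYX : Y ⊆ X) (hY : Y.Nonempty) : fmax Y ≤ fmax X :=
  le_fmax (hYX (fmax_mem hY))

lemma fmin_insert_of_lt {s : Finset ℕ} {a : ℕ} (h : ∀ x ∈ s, a < x) : fmin (insert a s) = a := by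
  refine le_antisymm (fmin_le (mem_insert_self a s)) ?_
  rcases mem_insert.1 (fmin_mem (insert_nonempty a s)) with ha | hs
  · exact ha.ge
  · exact (h _ hs).le

lemma fmax_insert_of_lt {s : Finset ℕ} {b : ℕ} (h : ∀ x ∈ s, x < b) : fmax (insert b s) = b := by
  refine le_antisymm ?_ (le_fmax (mem_insert_self b s))
  rcases mem_insert.1 (fmax_mem (insert_nonempty b s)) with hb | hs
  · exact hb.le
  · exact (h _ hs).le

section Consec

lemma Consec.mono {X Y : Finset ℕ} {x z : ℕ} (h : Consec Y x z) (hXY : X ⊆ Y) (hx : x ∈ X)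
    (hz : z ∈ X) : Consec X x z :=
  ⟨hx, hz, h.2.2.1, fun y hy => h.2.2.2 y (hXY hy)⟩

lemma Consec.insert_of_le_or_le {s : Finset ℕ} {b x z : ℕ} (h : Consec s x z) (hb : b ≤ x ∨ z ≤ b) :
    Consec (insert b s) x z := by
  refine ⟨mem_insert_of_mem h.1, mem_insert_of_mem h.2.1, h.2.2.1, fun y hy => ?_⟩
  rcases mem_insert.1 hy with rfl | hy
  · exact hb
  · exact h.2.2.2 y hy

lemma not_consec_singleton {a x z : ℕ} : ¬ Consec {a} x z := by
  rintro ⟨hx, hz, hxz, -⟩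
  rw [mem_singleton] at hx hz
  omega

lemma Consec.eq_of_pair {a b x z : ℕ} (h : Consec {a, b} x z) (hab : a < b) : x = a ∧ z = b := by
  obtain ⟨hx, hz, hxz, -⟩ := h
  simp only [mem_insert, mem_singleton] at hx hz
  omega

lemma Consec.of_union {A B : Finset ℕ} {a x z : ℕ} (h : Consec (A ∪ B) x z) (ha : a ∈ A)
    (hA : ∀ y ∈ A, y ≤ a) (hB : ∀ y ∈ B, a < y) : Consec A x z ∨ Consec (insert a B) x z := by
  obtain ⟨hx, hz, hxz, hbetween⟩ := h
  rcases mem_union.1 hz with hzA | hzB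
  · have hxA : x ∈ A := (mem_union.1 hx).resolve_right fun hxB => by
      have := hB x hxB; have := hA z hzA; omega
    exact Or.inl ⟨hxA, hzA, hxz, fun y hy => hbetween y (mem_union_left B hy)⟩
  · have hxaB : x ∈ insert a B := by
      rcases mem_union.1 hx with hxA | hxB
      · have := hA x hxA
        rcases hbetween a (mem_union_left B ha) with h | h
        · rw [le_antisymm this h]; exact mem_insert_self a B
        · have := hB z hzB; omega
      · exact mem_insert_of_mem hxB
    refine Or.inr ⟨hxaB, mem_insert_of_mem hzB, hxz, fun y hy => ?_⟩
    rcases mem_insert.1 hy with rfl | hy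
    · exact hbetween y (mem_union_left B ha)
    · exact hbetween y (mem_union_right A hy)

lemma Consec.of_insert_of_lt {s : Finset ℕ} {a x z : ℕ} (h : Consec (insert a s) x z)
    (hs : ∀ y ∈ s, a < y) : (x = a ∧ z = fmin s) ∨ Consec s x z := by
  obtain ⟨hx, hz, hxz, hbetween⟩ := h
  have hzs : z ∈ s := by
    rcases mem_insert.1 hz with rfl | hz
    · rcases mem_insert.1 hx with rfl | hx
      · omega
      · have := hs x hx; omega
    · exact hz
  rcases mem_insert.1 hx with rfl | hxs
  · refine Or.inl ⟨rfl, le_antisymm ?_ (fmin_le hzs)⟩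
    have hmin := fmin_mem ⟨z, hzs⟩
    rcases hbetween _ (mem_insert_of_mem hmin) with h | h
    · have := hs _ hmin; omega
    · exact h
  · exact Or.inr ⟨hxs, hzs, hxz, fun y hy => hbetween y (mem_insert_of_mem hy)⟩

lemma consec_insert_fmin {s : Finset ℕ} {a : ℕ} (hs : ∀ y ∈ s, a < y) (hsne : s.Nonempty) :
    Consec (insert a s) a (fmin s) := by
  refine ⟨mem_insert_self a s, mem_insert_of_mem (fmin_mem hsne), hs _ (fmin_mem hsne),
    fun y hy => ?_⟩
  rcases mem_insert.1 hy with rfl | hy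
  · exact Or.inl le_rfl
  · exact Or.inr (fmin_le hy)

lemma consec_fmin_inter_Ioc {W : Finset ℕ} {x z : ℕ} (hx : x ∈ W)
    (hne : (W ∩ Ioc x z).Nonempty) : Consec W x (fmin (W ∩ Ioc x z)) := by
  have hu := mem_inter.1 (fmin_mem hne)
  refine ⟨hx, hu.1, (mem_Ioc.1 hu.2).1, fun y hy => ?_⟩
  by_contra! hlt
  have := fmin_le (mem_inter.2 ⟨hy, mem_Ioc.2 ⟨hlt.1, hlt.2.le.trans (mem_Ioc.1 hu.2).2⟩⟩)
  omega

end Consec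

def Sparse (Z : Finset ℕ) (N : ℕ) (Y : Finset ℕ) : Prop :=
  ∀ x z, Consec Y x z → N ≤ #(Z ∩ Ioc x z)

section Sparse

lemma Sparse.mono_left {Z Z' Y : Finset ℕ} {N : ℕ} (h : Sparse Z N Y) (hZ : Z ⊆ Z') :
    Sparse Z' N Y := fun x z hxz =>
  (h x z hxz).trans (card_le_card (inter_subset_inter_right hZ))

lemma sparse_singleton (Z : Finset ℕ) (N a : ℕ) : Sparse Z N {a} := fun _ _ h =>
  absurd h not_consec_singleton

lemma sparse_pair {Z : Finset ℕ} {N a b : ℕ} (hab : a < b) (h : N ≤ #(Z ∩ Ioc a b)) :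
    Sparse Z N {a, b} := by
  intro x z hxz
  obtain ⟨rfl, rfl⟩ := hxz.eq_of_pair hab
  exact h

lemma Sparse.union {Z A B : Finset ℕ} {N a : ℕ} (hA : Sparse Z N A) (haB : Sparse Z N (insert a B))
    (ha : a ∈ A) (hAa : ∀ y ∈ A, y ≤ a) (hB : ∀ y ∈ B, a < y) : Sparse Z N (A ∪ B) := by
  intro x z hxz
  rcases hxz.of_union ha hAa hB with h | h
  · exact hA x z h
  · exact haB x z h

end Sparse

def IsStack (f : ℕ → Finset ℕ) (n : ℕ) : Prop :=
  ∀ m, m + 1 < n → fmax (f m) < fmin (f (m + 1))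

namespace IsStack

variable {f : ℕ → Finset ℕ} {n : ℕ}

lemma lt (hf : IsStack f n) (hne : ∀ m < n, (f m).Nonempty) {s t a b : ℕ} (hst : s < t)
    (ht : t < n) (ha : a ∈ f s) (hb : b ∈ f t) : a < b := by
  induction t generalizing b with
  | zero => omega
  | succ t ih =>
    have hstep : fmax (f t) < fmin (f (t + 1)) := hf t ht
    have hb' := fmin_le hb
    rcases Nat.lt_succ_iff_lt_or_eq.1 hst with hst | rfl
    · have := ih hst (by omega) (fmax_mem (hne t (by omega)))
      omega
    · have := le_fmax ha
      omega

lemma strictMonoOn_fmin (hf : IsStack f n) (hne : ∀ m < n, (f m).Nonempty) :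
    StrictMonoOn (fun m => fmin (f m)) (Set.Iio n) := fun s _ t ht hst =>
  hf.lt hne hst ht (fmin_mem (hne s (hst.trans ht))) (fmin_mem (hne t ht))

/-- The minima of the blocks `f s, …, f t` lie in `(x, y]`. -/
lemma le_card_inter_Ioc (hf : IsStack f n) (hne : ∀ m < n, (f m).Nonempty) {Z : Finset ℕ}
    (hfZ : ∀ m < n, f m ⊆ Z) {s t x y : ℕ} (ht : t < n) (hx : x < fmin (f s))
    (hy : fmin (f t) ≤ y) : t + 1 - s ≤ #(Z ∩ Ioc x y) := by
  have hmono := hf.strictMonoOn_fmin hne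
  rw [← Nat.card_Icc s t]
  refine card_le_card_of_injOn (fun m => fmin (f m)) (fun m hm => ?_)
    (hmono.injOn.mono fun m hm => ?_)
  · rw [mem_coe, mem_Icc] at hm
    have hmn : m < n := by omega
    have h1 : fmin (f s) ≤ fmin (f m) := (hmono.le_iff_le (show s < n by omega) hmn).2 hm.1
    have h2 : fmin (f m) ≤ fmin (f t) := (hmono.le_iff_le hmn ht).2 hm.2
    beta_reduce
    rw [mem_coe]
    exact mem_inter.2 ⟨hfZ m hmn (fmin_mem (hne m hmn)), mem_Ioc.2 ⟨by omega, by omega⟩⟩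
  · rw [mem_coe, mem_Icc] at hm
    exact (hm.2.trans_lt ht : m < n)

end IsStack

section Largeness

lemma OmegaLarge.nonempty_s14 {d : ℕ} {X : Finset ℕ} (h : OmegaLarge d X) : X.Nonempty := by
  cases d with
  | zero => exact h
  | succ d => exact h.1

lemma OmegaLarge.mono {d e : ℕ} {X : Finset ℕ} (h : OmegaLarge d X) (hed : e ≤ d) :
    OmegaLarge e X := by
  induction d generalizing e X with
  | zero => rwa [Nat.le_zero.1 hed]
  | succ d ih =>
    rcases e with _ | e
    · exact h.nonempty_s14
    · obtain ⟨hne, f, hf, hst, hmin, hX⟩ := h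
      exact ⟨hne, f, fun m hm => ih (hf m hm) (by omega), hst, hmin, hX⟩

lemma subset_of_eq_insert_biUnion {X : Finset ℕ} {f : ℕ → Finset ℕ} {n m z : ℕ}
    (hX : X = insert z ((range n).biUnion f)) (hm : m < n) : f m ⊆ X := by
  rw [hX]
  exact (subset_biUnion_of_mem f (mem_range.2 hm)).trans (subset_insert _ _)

lemma omegaLarge_insert_biUnion {d z : ℕ} {f : ℕ → Finset ℕ} (hf : ∀ m < z, OmegaLarge d (f m))
    (hst : IsStack f z) (hz : ∀ m < z, z < fmin (f m)) :
    OmegaLarge (d + 1) (insert z ((range z).biUnion f)) := by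
  have hmin : fmin (insert z ((range z).biUnion f)) = z := by
    refine fmin_insert_of_lt fun x hx => ?_
    obtain ⟨m, hm, hx⟩ := mem_biUnion.1 hx
    exact (hz m (mem_range.1 hm)).trans_le (fmin_le hx)
  refine ⟨insert_nonempty _ _, f, ?_, ?_, ?_, ?_⟩ <;> rw [hmin]
  exacts [hf, hst, hz]

lemma card_le_fmax_sub_fmin {B : Finset ℕ} : #B ≤ fmax B + 1 - fmin B := by
  rw [← Nat.card_Icc]
  exact card_le_card fun x hx => mem_Icc.2 ⟨fmin_le hx, le_fmax hx⟩

/-- The `min B` blocks of `B` have distinct minima. -/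
lemma OmegaLarge.fmin_lt_card_s14 {B : Finset ℕ} (h : OmegaLarge 1 B) : fmin B < #B := by
  obtain ⟨hne, f, hf, hst, hmin, hB⟩ := h
  have hfne : ∀ m < fmin B, (f m).Nonempty := hf
  have hinj := (IsStack.strictMonoOn_fmin hst hfne).injOn
  have hle : #(range (fmin B)) ≤ #(B.erase (fmin B)) := by
    refine card_le_card_of_injOn (fun m => fmin (f m)) (fun m hm => ?_) fun s hs t ht => ?_
    · rw [mem_coe, mem_range] at hm
      have hmem : fmin (f m) ∈ B := subset_of_eq_insert_biUnion hB hm (fmin_mem (hfne m hm))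
      exact mem_erase.2 ⟨(hmin m hm).ne', hmem⟩
    · exact hinj (mem_range.1 hs) (mem_range.1 ht)
  rw [card_range, card_erase_of_mem (fmin_mem hne)] at hle
  have := card_pos.2 hne
  omega

lemma OmegaLarge.two_mul_fmin_le_fmax_s14 {B : Finset ℕ} (h : OmegaLarge 1 B) :
    2 * fmin B ≤ fmax B := by
  have := h.fmin_lt_card_s14
  have := card_le_fmax_sub_fmin (B := B)
  omega

/-- Each of the `min V` blocks of `V` at least doubles the maximum. -/
lemma OmegaLarge.two_pow_fmin_le_fmax_s14 {V : Finset ℕ} (h : OmegaLarge 2 V) (hV : 1 ≤ fmin V) :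
    2 ^ fmin V ≤ fmax V := by
  obtain ⟨hne, f, hf, hst, hmin, hVf⟩ := h
  set v := fmin V
  have hblock : ∀ t < v, 2 ^ (t + 1) * (v + 1) ≤ fmax (f t) := by
    intro t ht
    have hdouble := (hf t ht).two_mul_fmin_le_fmax_s14
    induction t with
    | zero => have := hmin 0 ht; omega
    | succ t ih =>
      have := ih (by omega) (hf t (by omega)).two_mul_fmin_le_fmax_s14
      have := hst t ht
      rw [pow_succ]
      nlinarith
  have hlast := hblock (v - 1) (by omega)
  have hsub : fmax (f (v - 1)) ≤ fmax V :=
    fmax_le_fmax (subset_of_eq_insert_biUnion hVf (by omega)) (hf (v - 1) (by omega)).nonempty_s14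
  rw [Nat.sub_add_cancel hV] at hlast
  nlinarith

lemma exists_lt_le_succ {c : ℕ → ℕ} {a n : ℕ} (h0 : c 0 < a) (hn : a ≤ c n) :
    ∃ m < n, c m < a ∧ a ≤ c (m + 1) := by
  induction n with
  | zero => omega
  | succ n ih =>
    by_cases h : a ≤ c n
    · obtain ⟨m, hm, hm'⟩ := ih h
      exact ⟨m, by omega, hm'⟩
    · exact ⟨n, by omega, by omega, hn⟩

lemma omegaLarge_succ_of_cuts {d : ℕ} {X : Finset ℕ} {c : ℕ → ℕ} (hX : X.Nonempty)
    (h0 : c 0 = fmin X) (hn : fmax X ≤ c (fmin X))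
    (hblocks : ∀ m < fmin X,
      OmegaLarge d ((X.erase (fmin X)).filter fun a => c m < a ∧ a ≤ c (m + 1))) :
    OmegaLarge (d + 1) X := by
  set x₀ := fmin X
  set block : ℕ → Finset ℕ := fun m => (X.erase x₀).filter fun a => c m < a ∧ a ≤ c (m + 1)
  have hmem : ∀ m < x₀, fmin (block m) ∈ block m ∧ fmax (block m) ∈ block m := fun m hm =>
    ⟨fmin_mem (hblocks m hm).nonempty_s14, fmax_mem (hblocks m hm).nonempty_s14⟩
  have hXeq : X = insert x₀ ((range x₀).biUnion block) := by
    ext a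
    simp only [mem_insert, mem_biUnion, mem_range, block, mem_filter, mem_erase]
    constructor
    · intro ha
      by_cases hax : a = x₀
      · exact Or.inl hax
      · obtain ⟨m, hm, hcm⟩ := exists_lt_le_succ (c := c)
          (h0 ▸ lt_of_le_of_ne (fmin_le ha) (Ne.symm hax)) ((le_fmax ha).trans hn)
        exact Or.inr ⟨m, hm, ⟨hax, ha⟩, hcm⟩
    · rintro (rfl | ⟨m, -, ⟨-, ha⟩, -⟩)
      · exact fmin_mem hX
      · exact ha
  rw [hXeq]
  refine omegaLarge_insert_biUnion hblocks (fun m hm => ?_) fun m hm => ?_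
  · have h₁ := (mem_filter.1 (hmem m (by omega)).2).2.2
    have h₂ := (mem_filter.1 (hmem (m + 1) hm).1).2.1
    omega
  · have h := mem_erase.1 (mem_filter.1 (hmem m hm).1).1
    exact lt_of_le_of_ne (fmin_le h.2) (Ne.symm h.1)

/-- The blocks of `Y` are enlarged to consecutive intervals of `X`, cut at the maxima of the
blocks of `Y`, the last one reaching up to `max X`. -/
lemma OmegaLarge.of_subset {d : ℕ} {X Y : Finset ℕ} (hY : OmegaLarge d Y) (hYX : Y ⊆ X)
    (hX : 1 ≤ fmin X) : OmegaLarge d X := by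
  induction d generalizing X Y with
  | zero => exact Nonempty.mono hYX hY
  | succ d ih =>
    obtain ⟨hYne, g, hg, hgst, hgmin, hYg⟩ := hY
    have hXY : fmin X ≤ fmin Y := fmin_le_fmin hYX hYne
    have hgX : ∀ m < fmin Y, g m ⊆ X := fun m hm =>
      (subset_of_eq_insert_biUnion hYg hm).trans hYX
    let c : ℕ → ℕ := fun m =>
      if m = 0 then fmin X else if m < fmin X then fmax (g (m - 1)) else fmax X
    refine omegaLarge_succ_of_cuts (c := c) (hYne.mono hYX) (by simp [c])
      (by simp [c, show fmin X ≠ 0 by omega]) fun m hm => ?_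
    have hsub : g m ⊆ (X.erase (fmin X)).filter fun a => c m < a ∧ a ≤ c (m + 1) := by
      intro a ha
      have hay : fmin Y < a := (hgmin m (by omega)).trans_le (fmin_le ha)
      refine mem_filter.2 ⟨mem_erase.2 ⟨by omega, hgX m (by omega) ha⟩, ?_, ?_⟩
      · rcases m with _ | m
        · simp only [c, if_true]
          omega
        · have := hgst m (by omega)
          have := fmin_le ha
          simp only [c, Nat.add_one_ne_zero, if_false, if_pos hm, Nat.add_sub_cancel]
          omega
      · by_cases hm' : m + 1 < fmin X
        · simp only [c, Nat.add_one_ne_zero, if_false, if_pos hm', Nat.add_sub_cancel]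
          exact le_fmax ha
        · simp only [c, Nat.add_one_ne_zero, if_false, if_neg hm']
          exact le_fmax (hgX m (by omega) ha)
    refine ih (hg m (by omega)) hsub ?_
    have h := mem_erase.1 (mem_filter.1 (fmin_mem ((hg m (by omega)).nonempty_s14.mono hsub))).1
    have := fmin_le h.2
    omega

lemma persistent_zero_of_omegaLarge {d k : ℕ} {X : Finset ℕ} (h : OmegaLarge d X) :
    Persistent d 1 k 0 X :=
  ⟨fun _ => X, fun _ _ => h, fun m hm => absurd hm (by omega), by
    rw [range_one, singleton_biUnion]⟩

end Largeness

section Supply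

/-- A gap of `insert z (⋃ j < m, Y j)` either lies inside one `Y j` or contains the minima of at
least `N + 1` blocks `g t`. -/
lemma sparse_insert_biUnion {Z : Finset ℕ} {g Y : ℕ → Finset ℕ} {n m N z : ℕ}
    (hg : IsStack g n) (hgne : ∀ t < n, (g t).Nonempty) (hgZ : ∀ t < n, g t ⊆ Z)
    (hz : z < fmin (g 0)) (hmn : m * (N + 1) < n)
    (hYg : ∀ j < m, Y j ⊆ g ((j + 1) * (N + 1))) (hY : ∀ j < m, Sparse Z N (Y j)) :
    Sparse Z N (insert z ((range m).biUnion Y)) := by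
  have hidx : ∀ j < m, (j + 1) * (N + 1) < n := fun j hj =>
    lt_of_le_of_lt (Nat.mul_le_mul_right _ hj) hmn
  have hgz : ∀ t < n, ∀ a ∈ g t, z < a := fun t ht a ha =>
    hz.trans_le (((hg.strictMonoOn_fmin hgne).le_iff_le (show 0 < n by omega) ht).2
      (Nat.zero_le t) |>.trans (fmin_le ha))
  have hmem : ∀ a ∈ insert z ((range m).biUnion Y), a = z ∨ ∃ j < m, a ∈ Y j := by
    intro a ha
    simpa only [mem_insert, mem_biUnion, mem_range, exists_prop] using ha
  intro u v huv
  obtain ⟨j', hj', hv⟩ : ∃ j' < m, v ∈ Y j' := by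
    rcases hmem v huv.2.1 with rfl | h
    · rcases hmem u huv.1 with rfl | ⟨j, hj, hu⟩
      · exact absurd huv.2.2.1 (lt_irrefl _)
      · exact absurd huv.2.2.1 (hgz _ (hidx j hj) u (hYg j hj hu)).not_gt
    · exact h
  have hv' : fmin (g ((j' + 1) * (N + 1))) ≤ v := fmin_le (hYg j' hj' hv)
  rcases hmem u huv.1 with rfl | ⟨j, hj, hu⟩
  · have := hg.le_card_inter_Ioc hgne hgZ (s := 0) (hidx j' hj') hz hv'
    have : N + 1 ≤ (j' + 1) * (N + 1) := Nat.le_mul_of_pos_left _ (by omega)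
    omega
  rcases lt_trichotomy j j' with hjj | rfl | hjj
  · have hle : (j + 1) * (N + 1) + (N + 1) ≤ (j' + 1) * (N + 1) := by
      rw [← Nat.succ_mul]
      exact Nat.mul_le_mul_right _ (by omega)
    have hnext : (j + 1) * (N + 1) + 1 < n := by have := hidx j' hj'; omega
    have hu' : u < fmin (g ((j + 1) * (N + 1) + 1)) :=
      hg.lt hgne (Nat.lt_succ_self _) hnext (hYg j hj hu) (fmin_mem (hgne _ hnext))
    have := hg.le_card_inter_Ioc hgne hgZ (hidx j' hj') hu' hv'
    omega
  · exact hY j hj u v (huv.mono (subset_of_eq_insert_biUnion rfl hj) hu hv)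
  · have hlt : (j' + 1) * (N + 1) < (j + 1) * (N + 1) :=
      Nat.mul_lt_mul_of_pos_right (by omega) (by omega)
    exact absurd huv.2.2.1 (hg.lt hgne hlt (hidx j hj) (hYg j' hj' hv) (hYg j hj hu)).not_gt

lemma two_pow_two_pow_lt {A B : Finset ℕ} {z w : ℕ} (hA : OmegaLarge 2 A) (hB : OmegaLarge 2 B)
    (hzA : z < fmin A) (hAB : fmax A < fmin B) (hBw : fmax B < w) : 2 ^ 2 ^ (z + 1) < w := by
  have hA' := hA.two_pow_fmin_le_fmax_s14 (by omega)
  have hB' := hB.two_pow_fmin_le_fmax_s14 (by omega)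
  calc 2 ^ 2 ^ (z + 1) ≤ 2 ^ fmin B :=
        Nat.pow_le_pow_right two_pos ((Nat.pow_le_pow_right two_pos hzA).trans (by omega))
    _ < w := hB'.trans_lt hBw

lemma mul_succ_lt_of_le_two_pow_two_pow {z N w : ℕ} (hN : N ≤ 2 ^ 2 ^ z)
    (hw : 2 ^ 2 ^ (z + 1) < w) : z * (N + 1) < w := by
  have hz : z < 2 ^ 2 ^ z := Nat.lt_two_pow_self.trans Nat.lt_two_pow_self
  rw [pow_succ, pow_mul, sq] at hw
  nlinarith

/-- The first two blocks of `Z` push the third one, `f 2`, beyond `2^2^(min Z + 1)`, so `f 2`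
has enough sub-blocks to place the `min Z` recursively chosen pieces `N + 1` sub-blocks apart. -/
theorem exists_sparse_omegaLarge (c : ℕ) {Z : Finset ℕ} (hZ : OmegaLarge (2 * c + 1) Z)
    (hZ3 : 3 ≤ fmin Z) {N : ℕ} (hN : N ≤ 2 ^ 2 ^ fmin Z) :
    ∃ Y ⊆ Z, OmegaLarge c Y ∧ Sparse Z N Y := by
  induction c generalizing Z N with
  | zero =>
    exact ⟨{fmin Z}, singleton_subset_iff.2 (fmin_mem hZ.nonempty_s14), singleton_nonempty _,
      sparse_singleton _ _ _⟩
  | succ c ih =>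
    obtain ⟨hZne, f, hf, hfst, hfmin, hZf⟩ := hZ
    set z := fmin Z
    have hw : 2 ^ 2 ^ (z + 1) < fmin (f 2) :=
      two_pow_two_pow_lt ((hf 0 (by omega)).mono (by omega)) ((hf 1 (by omega)).mono (by omega))
        (hfmin 0 (by omega)) (hfst 0 (by omega)) (hfst 1 (by omega))
    have hf2 : OmegaLarge (2 * c + 1 + 1) (f 2) := hf 2 (by omega)
    obtain ⟨-, g, hg, hgst, hgmin, hfg⟩ := hf2
    set w := fmin (f 2)
    have hzw : z < w := hfmin 2 (by omega)
    have hgne : ∀ t < w, (g t).Nonempty := fun t ht => (hg t ht).nonempty_s14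
    have hgZ : ∀ t < w, g t ⊆ Z := fun t ht =>
      (subset_of_eq_insert_biUnion hfg ht).trans (subset_of_eq_insert_biUnion hZf (by omega))
    have hzN : z * (N + 1) < w := mul_succ_lt_of_le_two_pow_two_pow hN hw
    have hidx : ∀ j < z, (j + 1) * (N + 1) < w := fun j hj =>
      lt_of_le_of_lt (Nat.mul_le_mul_right _ hj) hzN
    have hpieces : ∀ j < z, ∃ Yj ⊆ g ((j + 1) * (N + 1)),
        OmegaLarge c Yj ∧ Sparse (g ((j + 1) * (N + 1))) N Yj := by
      intro j hj
      have := hgmin _ (hidx j hj)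
      refine ih (hg _ (hidx j hj)) (by omega) (hN.trans ?_)
      exact Nat.pow_le_pow_right two_pos (Nat.pow_le_pow_right two_pos (by omega))
    choose! Y hYg hY hYsp using hpieces
    refine ⟨insert z ((range z).biUnion Y), ?_, ?_, ?_⟩
    · refine insert_subset (fmin_mem hZne) (biUnion_subset.2 fun j hj => ?_)
      exact (hYg j (mem_range.1 hj)).trans (hgZ _ (hidx j (mem_range.1 hj)))
    · refine omegaLarge_insert_biUnion hY (fun j hj => ?_) (fun j hj => ?_)
      · have hlt : (j + 1) * (N + 1) < (j + 1 + 1) * (N + 1) :=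
          Nat.mul_lt_mul_of_pos_right (by omega) (by omega)
        exact IsStack.lt hgst hgne hlt (hidx _ hj)
          (hYg j (by omega) (fmax_mem (hY j (by omega)).nonempty_s14))
          (hYg _ hj (fmin_mem (hY _ hj).nonempty_s14))
      · have := hgmin _ (hidx j hj)
        have := fmin_le_fmin (hYg j hj) (hY j hj).nonempty_s14
        omega
    · exact sparse_insert_biUnion hgst hgne hgZ (hzw.trans (hgmin 0 (by omega))) hzN hYg
        fun j hj => (hYsp j hj).mono_left (hgZ _ (hidx j hj))

end Supply

section Trees

def extensions (TT : Finset (List Bool)) (σ : List Bool) (z : ℕ) : Finset (List Bool) :=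
  (level TT z).filter (fun τ => σ <+: τ)

lemma mem_level {TT : Finset (List Bool)} {x : ℕ} {σ : List Bool} :
    σ ∈ level TT x ↔ σ ∈ TT ∧ σ.length = x := mem_filter

lemma mem_extensions {TT : Finset (List Bool)} {σ τ : List Bool} {z : ℕ} :
    τ ∈ extensions TT σ z ↔ τ ∈ TT ∧ τ.length = z ∧ σ <+: τ := by
  simp only [extensions, mem_filter, mem_level, and_assoc]

lemma extensions_self {TT : Finset (List Bool)} {σ : List Bool} (hσ : σ ∈ TT) :
    extensions TT σ σ.length = {σ} := by
  ext τ
  simp only [mem_extensions, mem_singleton]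
  constructor
  · rintro ⟨-, hlen, hpre⟩
    exact (hpre.eq_of_length hlen.symm).symm
  · rintro rfl
    exact ⟨hσ, rfl, List.prefix_refl _⟩

lemma inter_Ioc_erase_fmin {W : Finset ℕ} {x z : ℕ} (hne : (W ∩ Ioc x z).Nonempty) :
    (W ∩ Ioc x z).erase (fmin (W ∩ Ioc x z)) = W ∩ Ioc (fmin (W ∩ Ioc x z)) z := by
  have hu := mem_Ioc.1 (mem_inter.1 (fmin_mem hne)).2
  ext a
  simp only [mem_erase, mem_inter, mem_Ioc]
  constructor
  · rintro ⟨hau, ha, hxa, haz⟩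
    exact ⟨ha, lt_of_le_of_ne (fmin_le (mem_inter.2 ⟨ha, mem_Ioc.2 ⟨hxa, haz⟩⟩)) (Ne.symm hau),
      haz⟩
  · rintro ⟨ha, hua, haz⟩
    exact ⟨hua.ne', ha, by omega, haz⟩

lemma IsTree.take_mem_extensions {TT : Finset (List Bool)} (hT : IsTree TT) {σ τ : List Bool}
    {u z : ℕ} (hτ : τ ∈ extensions TT σ z) (hσu : σ.length ≤ u) (huz : u ≤ z) :
    τ.take u ∈ extensions TT σ u := by
  obtain ⟨hτT, hτlen, hστ⟩ := mem_extensions.1 hτ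
  refine mem_extensions.2 ⟨hT τ hτT _ (List.take_prefix _ _), by simp [hτlen, huz], ?_⟩
  exact List.prefix_of_prefix_length_le hστ (List.take_prefix _ _) (by simp [hτlen]; omega)

lemma filter_take_eq_extensions {TT : Finset (List Bool)} {σ ρ : List Bool} {u z : ℕ}
    (hρ : ρ ∈ extensions TT σ u) :
    {τ ∈ extensions TT σ z | τ.take u = ρ} = extensions TT ρ z := by
  obtain ⟨-, hρlen, hσρ⟩ := mem_extensions.1 hρ
  ext τ
  simp only [mem_filter, mem_extensions]
  constructor
  · rintro ⟨⟨hτT, hτlen, -⟩, rfl⟩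
    exact ⟨hτT, hτlen, List.take_prefix _ _⟩
  · rintro ⟨hτT, hτlen, hρτ⟩
    refine ⟨⟨hτT, hτlen, hσρ.trans hρτ⟩, ?_⟩
    rw [← hρlen]
    exact (List.prefix_iff_eq_take.1 hρτ).symm

/-- Group the nodes at level `z` by their ancestor at the next level of `W` above `x`. -/
lemma QuasiStrong.card_extensions {W : Finset ℕ} {TT : Finset (List Bool)}
    (hQS : QuasiStrong W TT) (n : ℕ) {x z : ℕ} {σ : List Bool} (hx : x ∈ W) (hz : z ∈ W)
    (hxz : x ≤ z) (hσ : σ ∈ level TT x) (hn : #(W ∩ Ioc x z) = n) :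
    #(extensions TT σ z) = 2 ^ n := by
  induction n generalizing x σ with
  | zero =>
    obtain rfl : z = x := by
      by_contra hzx
      have : z ∈ W ∩ Ioc x z := mem_inter.2 ⟨hz, mem_Ioc.2 ⟨by omega, le_rfl⟩⟩
      rw [card_eq_zero.1 hn] at this
      exact absurd this (notMem_empty z)
    rw [← (mem_level.1 hσ).2, extensions_self (mem_level.1 hσ).1, card_singleton, pow_zero]
  | succ n ih =>
    have hne : (W ∩ Ioc x z).Nonempty := card_pos.1 (by omega)
    set u := fmin (W ∩ Ioc x z)
    have hu : u ∈ W ∩ Ioc x z := fmin_mem hne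
    have hxu : x < u := (mem_Ioc.1 (mem_inter.1 hu).2).1
    have huz : u ≤ z := (mem_Ioc.1 (mem_inter.1 hu).2).2
    have hn' : #(W ∩ Ioc u z) = n := by
      rw [← inter_Ioc_erase_fmin hne, card_erase_of_mem (fmin_mem hne), hn, Nat.add_sub_cancel]
    have hmaps : Set.MapsTo (fun τ : List Bool => τ.take u) (extensions TT σ z : Set (List Bool))
        (extensions TT σ u : Set (List Bool)) := fun τ hτ =>
      hQS.1.take_mem_extensions hτ (by rw [(mem_level.1 hσ).2]; omega) huz
    have hfibre : ∀ ρ ∈ extensions TT σ u, #{τ ∈ extensions TT σ z | τ.take u = ρ} = 2 ^ n := by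
      intro ρ hρ
      obtain ⟨hρT, hρlen, -⟩ := mem_extensions.1 hρ
      rw [filter_take_eq_extensions hρ]
      exact ih (mem_inter.1 hu).1 huz (mem_level.2 ⟨hρT, hρlen⟩) hn'
    have hcard_u : #(extensions TT σ u) = 2 := hQS.2.2 x u (consec_fmin_inter_Ioc hx hne) σ hσ
    rw [card_eq_sum_card_fiberwise hmaps, sum_congr rfl hfibre, sum_const, hcard_u, smul_eq_mul,
      pow_succ, mul_comm]

lemma Compat.symm {ρ τ : List Bool} (h : Compat ρ τ) : Compat τ ρ :=
  Or.symm h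

lemma Compat.eq_of_length {ρ τ : List Bool} (h : Compat ρ τ) (hl : ρ.length = τ.length) :
    ρ = τ :=
  h.elim (fun h => h.eq_of_length hl) fun h => (h.eq_of_length hl.symm).symm

lemma Compat.prefix_of_length_le {ρ τ : List Bool} (h : Compat ρ τ) (hl : τ.length ≤ ρ.length) :
    τ <+: ρ :=
  h.elim (fun h => (h.eq_of_length (le_antisymm h.length_le hl)) ▸ List.prefix_refl _) id

lemma Compat.of_prefix {ρ σ τ : List Bool} (h : Compat ρ τ) (hστ : σ <+: τ) : Compat ρ σ :=
  h.elim (fun h => List.prefix_or_prefix_of_prefix h hστ) fun h => Or.inr (hστ.trans h)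

def LeavesColored (TT : Finset (List Bool)) (w : ℕ) (C : List Bool → ℕ) (c : ℕ)
    (S : Finset (List Bool)) : Prop :=
  ∀ σ, IsLeaf S σ → ∃ τ ∈ level TT w, σ <+: τ ∧ C τ = c

lemma LeavesColored.union {TT S₁ S₂ : Finset (List Bool)} {w c : ℕ} {C : List Bool → ℕ}
    (h₁ : LeavesColored TT w C c S₁) (h₂ : LeavesColored TT w C c S₂) :
    LeavesColored TT w C c (S₁ ∪ S₂) := by
  rintro ρ ⟨hρ, hmax⟩
  rcases mem_union.1 hρ with h | h
  · exact h₁ ρ ⟨h, fun τ hτ => hmax τ (mem_union_left _ hτ)⟩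
  · exact h₂ ρ ⟨h, fun τ hτ => hmax τ (mem_union_right _ hτ)⟩

lemma extensions_union_of_ne {S₁ S₂ : Finset (List Bool)} {τ₁ τ₂ ρ : List Bool} {z : ℕ}
    (hne : τ₁ ≠ τ₂) (hlen : τ₁.length = τ₂.length) (hρ : τ₁ <+: ρ)
    (hS₂ : ∀ ζ ∈ S₂, Compat ζ τ₂) : extensions (S₁ ∪ S₂) ρ z = extensions S₁ ρ z := by
  ext ζ
  simp only [mem_extensions, mem_union]
  constructor
  · rintro ⟨hζ | hζ, hζlen, hρζ⟩
    · exact ⟨hζ, hζlen, hρζ⟩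
    · have h₁ : τ₁ <+: ζ := hρ.trans hρζ
      have h₂ : τ₂ <+: ζ := (hS₂ ζ hζ).prefix_of_length_le (hlen ▸ h₁.length_le)
      exact absurd ((List.prefix_of_prefix_length_le h₁ h₂ hlen.le).eq_of_length hlen) hne
  · rintro ⟨hζ, h⟩
    exact ⟨Or.inl hζ, h⟩

lemma extensions_union_eq_pair {S₁ S₂ : Finset (List Bool)} {σ τ₁ τ₂ : List Bool} {ℓ : ℕ}
    (hτ₁ : τ₁ ∈ S₁) (hτ₂ : τ₂ ∈ S₂) (hc₁ : ∀ ρ ∈ S₁, Compat ρ τ₁) (hc₂ : ∀ ρ ∈ S₂, Compat ρ τ₂)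
    (hlen₁ : τ₁.length = ℓ) (hlen₂ : τ₂.length = ℓ) (hστ₁ : σ <+: τ₁) (hστ₂ : σ <+: τ₂) :
    extensions (S₁ ∪ S₂) σ ℓ = {τ₁, τ₂} := by
  ext ζ
  simp only [mem_extensions, mem_union, mem_insert, mem_singleton]
  constructor
  · rintro ⟨hζ | hζ, hζlen, -⟩
    · exact Or.inl ((hc₁ ζ hζ).eq_of_length (hζlen.trans hlen₁.symm))
    · exact Or.inr ((hc₂ ζ hζ).eq_of_length (hζlen.trans hlen₂.symm))
  · rintro (rfl | rfl)
    · exact ⟨Or.inl hτ₁, hlen₁, hστ₁⟩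
    · exact ⟨Or.inr hτ₂, hlen₂, hστ₂⟩

lemma QuasiStrong.mem_of_forall_compat {s : Finset ℕ} {S : Finset (List Bool)} {τ : List Bool}
    (hS : QuasiStrong s S) (hsne : s.Nonempty) (hc : ∀ ρ ∈ S, Compat ρ τ)
    (hlen : τ.length = fmin s) : τ ∈ S := by
  obtain ⟨ρ, hρ⟩ := hS.2.1 _ (fmin_mem hsne)
  obtain ⟨hρS, hρlen⟩ := mem_level.1 hρ
  rwa [← (hc ρ hρS).eq_of_length (hρlen.trans hlen.symm)]

lemma QuasiStrong.insert_union {s : Finset ℕ} {a : ℕ} {σ τ₁ τ₂ : List Bool}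
    {S₁ S₂ : Finset (List Bool)} (hs : ∀ y ∈ s, a < y) (hsne : s.Nonempty) (hσ : σ.length = a)
    (hστ₁ : σ <+: τ₁) (hστ₂ : σ <+: τ₂) (hlen₁ : τ₁.length = fmin s)
    (hlen₂ : τ₂.length = fmin s) (hne : τ₁ ≠ τ₂) (hS₁ : QuasiStrong s S₁)
    (hS₂ : QuasiStrong s S₂) (hc₁ : ∀ ρ ∈ S₁, Compat ρ τ₁) (hc₂ : ∀ ρ ∈ S₂, Compat ρ τ₂) :
    QuasiStrong (insert a s) (S₁ ∪ S₂) := by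
  have hτ₁ := hS₁.mem_of_forall_compat hsne hc₁ hlen₁
  have hτ₂ := hS₂.mem_of_forall_compat hsne hc₂ hlen₂
  have hlt : a < fmin s := hs _ (fmin_mem hsne)
  refine ⟨?_, ?_, ?_⟩
  · intro ρ hρ ρ' hρ'
    rcases mem_union.1 hρ with h | h
    · exact mem_union_left _ (hS₁.1 ρ h ρ' hρ')
    · exact mem_union_right _ (hS₂.1 ρ h ρ' hρ')
  · intro x hx
    rcases mem_insert.1 hx with rfl | hx
    · exact ⟨σ, mem_level.2 ⟨mem_union_left _ (hS₁.1 τ₁ hτ₁ σ hστ₁), hσ⟩⟩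
    · exact (hS₁.2.1 x hx).mono (filter_subset_filter _ subset_union_left)
  · intro x z hxz ρ hρ
    obtain ⟨hρS, hρlen⟩ := mem_level.1 hρ
    show #(extensions (S₁ ∪ S₂) ρ z) = 2
    rcases hxz.of_insert_of_lt hs with ⟨rfl, rfl⟩ | hxz
    · have hbelow : ∀ {S : Finset (List Bool)} {τ : List Bool}, (∀ ρ ∈ S, Compat ρ τ) →
          σ <+: τ → τ.length = fmin s → ρ ∈ S → ρ = σ := by
        intro S τ hc hστ hlen hρS'
        have hρτ := (hc ρ hρS').symm.prefix_of_length_le (by omega)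
        exact (List.prefix_of_prefix_length_le hρτ hστ (by omega)).eq_of_length (by omega)
      obtain rfl : ρ = σ := (mem_union.1 hρS).elim (hbelow hc₁ hστ₁ hlen₁) (hbelow hc₂ hστ₂ hlen₂)
      rw [extensions_union_eq_pair hτ₁ hτ₂ hc₁ hc₂ hlen₁ hlen₂ hστ₁ hστ₂, card_pair hne]
    · have hx : fmin s ≤ x := fmin_le hxz.1
      rcases mem_union.1 hρS with h | h
      · rw [extensions_union_of_ne hne (hlen₁.trans hlen₂.symm)
          ((hc₁ ρ h).prefix_of_length_le (by omega)) hc₂]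
        exact hS₁.2.2 x z hxz ρ (mem_level.2 ⟨h, hρlen⟩)
      · rw [union_comm, extensions_union_of_ne (Ne.symm hne) (hlen₂.trans hlen₁.symm)
          ((hc₂ ρ h).prefix_of_length_le (by omega)) hc₁]
        exact hS₂.2.2 x z hxz ρ (mem_level.2 ⟨h, hρlen⟩)

section ColoredSubtree

variable {W : Finset ℕ} {TT : Finset (List Bool)} {C : List Bool → ℕ} {k : ℕ}

/-- The path of prefixes of `σ`, whose only leaf `σ` extends to some leaf of `TT`. -/
lemma QuasiStrong.exists_colored_path (hQS : QuasiStrong W TT)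
    (hC : ∀ σ ∈ level TT (fmax W), C σ < k) {a : ℕ} (haW : a ∈ W) {σ : List Bool}
    (hσ : σ ∈ level TT a) : ∃ c < k, ∃ S ⊆ TT,
      QuasiStrong {a} S ∧ (∀ ρ ∈ S, Compat ρ σ) ∧ LeavesColored TT (fmax W) C c S := by
  obtain ⟨hσT, hσlen⟩ := mem_level.1 hσ
  obtain ⟨τ, hτ⟩ : (extensions TT σ (fmax W)).Nonempty := by
    rw [← card_pos, hQS.card_extensions _ haW (fmax_mem ⟨a, haW⟩) (le_fmax haW) hσ rfl]
    positivity
  obtain ⟨hτT, hτlen, hστ⟩ := mem_extensions.1 hτ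
  have hσS : σ ∈ TT.filter (· <+: σ) := mem_filter.2 ⟨hσT, List.prefix_refl _⟩
  refine ⟨C τ, hC τ (mem_level.2 ⟨hτT, hτlen⟩), TT.filter (· <+: σ), filter_subset _ _,
    ⟨?_, ?_, fun x z hxz => absurd hxz not_consec_singleton⟩, fun ρ hρ => ?_, fun ρ hρ => ?_⟩
  · intro ρ hρ ρ' hρ'
    exact mem_filter.2 ⟨hQS.1 ρ (mem_filter.1 hρ).1 ρ' hρ', hρ'.trans (mem_filter.1 hρ).2⟩
  · intro x hx
    rw [mem_singleton.1 hx]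
    exact ⟨σ, mem_level.2 ⟨hσS, hσlen⟩⟩
  · exact Or.inl (mem_filter.1 hρ).2
  · obtain rfl : σ = ρ := hρ.2 σ hσS (mem_filter.1 hρ.1).2
    exact ⟨τ, mem_level.2 ⟨hτT, hτlen⟩, hστ, rfl⟩

/-- A gap of `T` levels of `W` gives `σ` at least `2 ^ T > k` children at the next level of `Y`;
two of their subtrees (by induction) share a colour and are merged. -/
theorem QuasiStrong.exists_colored_subtree {T : ℕ} (hQS : QuasiStrong W TT)
    (hC : ∀ σ ∈ level TT (fmax W), C σ < k) (hkT : k < 2 ^ T) {Y : Finset ℕ} (hYW : Y ⊆ W)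
    (hY : Y.Nonempty) (hsp : Sparse W T Y) :
    ∀ σ ∈ level TT (fmin Y), ∃ c < k, ∃ S ⊆ TT,
      QuasiStrong Y S ∧ (∀ ρ ∈ S, Compat ρ σ) ∧ LeavesColored TT (fmax W) C c S := by
  induction Y using Finset.induction_on_min with
  | empty => exact absurd hY not_nonempty_empty
  | insert a s hs ih =>
    intro σ hσ
    rw [fmin_insert_of_lt hs] at hσ
    have haW : a ∈ W := hYW (mem_insert_self a s)
    rcases s.eq_empty_or_nonempty with rfl | hsne
    · rw [insert_empty]
      exact hQS.exists_colored_path hC haW hσ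
    have hmin := fmin_mem hsne
    have hsW : s ⊆ W := (subset_insert a s).trans hYW
    have hsp' : Sparse W T s := fun x z hxz =>
      hsp x z (hxz.insert_of_le_or_le (Or.inl (hs x hxz.1).le))
    have hchildren : k < #(extensions TT σ (fmin s)) := by
      rw [hQS.card_extensions _ haW (hsW hmin) (hs _ hmin).le hσ rfl]
      exact hkT.trans_le (Nat.pow_le_pow_right two_pos (hsp _ _ (consec_insert_fmin hs hsne)))
    have hsub : ∀ τ ∈ extensions TT σ (fmin s), ∃ c < k, ∃ S ⊆ TT,
        QuasiStrong s S ∧ (∀ ρ ∈ S, Compat ρ τ) ∧ LeavesColored TT (fmax W) C c S :=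
      fun τ hτ => ih hsW hsne hsp' τ (mem_filter.1 hτ).1
    choose! col hcol S hST hSq hSc hSl using hsub
    obtain ⟨τ₁, hτ₁, τ₂, hτ₂, hne, hcol_eq⟩ := exists_ne_map_eq_of_card_lt_of_maps_to
      (t := range k) (by rwa [card_range]) fun τ hτ => mem_range.2 (hcol τ hτ)
    obtain ⟨-, hlen₁, hστ₁⟩ := mem_extensions.1 hτ₁
    obtain ⟨-, hlen₂, hστ₂⟩ := mem_extensions.1 hτ₂
    refine ⟨col τ₁, hcol τ₁ hτ₁, S τ₁ ∪ S τ₂, union_subset (hST τ₁ hτ₁) (hST τ₂ hτ₂),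
      QuasiStrong.insert_union hs hsne (mem_level.1 hσ).2 hστ₁ hστ₂ hlen₁ hlen₂ hne
        (hSq τ₁ hτ₁) (hSq τ₂ hτ₂) (hSc τ₁ hτ₁) (hSc τ₂ hτ₂), fun ρ hρ => ?_,
      (hSl τ₁ hτ₁).union (hcol_eq ▸ hSl τ₂ hτ₂)⟩
    rcases mem_union.1 hρ with h | h
    · exact (hSc τ₁ hτ₁ ρ h).of_prefix hστ₁
    · exact (hSc τ₂ hτ₂ ρ h).of_prefix hστ₂

end ColoredSubtree

theorem persClause_of_sparse {k T : ℕ} {W Y : Finset ℕ} (hYW : Y ⊆ W) (hY : Y.Nonempty)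
    (hkT : k < 2 ^ T) (hsp : Sparse W T Y) : PersClause k W Y := by
  intro TT hQS C hC
  obtain ⟨σ, hσ⟩ := hQS.2.1 _ (hYW (fmin_mem hY))
  obtain ⟨c, hc, S, hST, hSq, -, hSl⟩ := hQS.exists_colored_subtree hC hkT hYW hY hsp σ hσ
  exact ⟨c, hc, S, hST, hSq, hSl⟩

end Trees

section Refinement

lemma exists_split_top (D : Finset ℕ) {t : ℕ} (ht : t ≤ #D) :
    ∃ D₀ D₁, D₀ ∪ D₁ = D ∧ #D₁ = t ∧ ∀ x ∈ D₀, ∀ y ∈ D₁, x < y := by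
  induction t with
  | zero => exact ⟨D, ∅, union_empty D, card_empty, fun _ _ _ h => absurd h (notMem_empty _)⟩
  | succ t ih =>
    obtain ⟨D₀, D₁, hD, hD₁, hlt⟩ := ih (by omega)
    have hD₀ : D₀.Nonempty := by
      rw [← card_pos]
      have := hD ▸ card_union_le D₀ D₁
      omega
    have hm := fmax_mem hD₀
    have hmD₁ : fmax D₀ ∉ D₁ := fun h => lt_irrefl _ (hlt _ hm _ h)
    refine ⟨D₀.erase (fmax D₀), insert (fmax D₀) D₁, ?_, by rw [card_insert_of_notMem hmD₁, hD₁],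
      fun x hx y hy => ?_⟩
    · rw [union_insert, ← insert_union, insert_erase hm, hD]
    · have hx' := mem_erase.1 hx
      rcases mem_insert.1 hy with rfl | hy
      · exact lt_of_le_of_ne (le_fmax hx'.2) hx'.1
      · exact hlt x hx'.2 y hy

/-- Peel off the top `T` elements of `X ∩ (a, b]` and recurse below them. -/
lemma exists_sparse_grid {X : Finset ℕ} {T : ℕ} (hT : 1 ≤ T) {M : ℕ} (hM : 1 ≤ M) {a b : ℕ}
    (hab : a < b) (hb : b ∈ X) (hcard : T * M ≤ #(X ∩ Ioc a b)) :
    ∃ E ⊆ X ∩ Ioc a b, b ∈ E ∧ M ≤ #E ∧ Sparse X T (insert a E) := by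
  induction M, hM using Nat.le_induction generalizing b with
  | base =>
    refine ⟨{b}, singleton_subset_iff.2 (mem_inter.2 ⟨hb, mem_Ioc.2 ⟨hab, le_rfl⟩⟩),
      mem_singleton_self b, by rw [card_singleton], sparse_pair hab (by simpa using hcard)⟩
  | succ M hM ih =>
    obtain ⟨D₀, D₁, hD, hD₁, hlt⟩ := exists_split_top (X ∩ Ioc a b) (t := T) (by nlinarith)
    have hD₀card : T * M ≤ #D₀ := by
      have := hD ▸ card_union_le D₀ D₁
      rw [mul_add_one] at hcard
      omega
    have hD₀ : D₀.Nonempty := card_pos.1 (by nlinarith)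
    obtain ⟨y, hy⟩ : D₁.Nonempty := card_pos.1 (by omega)
    set c := fmax D₀
    have hcD : c ∈ X ∩ Ioc a b := hD ▸ mem_union_left _ (fmax_mem hD₀)
    have hcD' := mem_inter.1 hcD
    have hyD := mem_inter.1 (hD ▸ mem_union_right _ hy : y ∈ X ∩ Ioc a b)
    have hcb : c < b := (hlt c (fmax_mem hD₀) y hy).trans_le (mem_Ioc.1 hyD.2).2
    have hD₀sub : D₀ ⊆ X ∩ Ioc a c := fun x hx => by
      have := mem_inter.1 (hD ▸ mem_union_left _ hx : x ∈ X ∩ Ioc a b)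
      exact mem_inter.2 ⟨this.1, mem_Ioc.2 ⟨(mem_Ioc.1 this.2).1, le_fmax hx⟩⟩
    have hD₁sub : D₁ ⊆ X ∩ Ioc c b := fun x hx => by
      have := mem_inter.1 (hD ▸ mem_union_right _ hx : x ∈ X ∩ Ioc a b)
      exact mem_inter.2 ⟨this.1, mem_Ioc.2 ⟨hlt c (fmax_mem hD₀) x hx, (mem_Ioc.1 this.2).2⟩⟩
    obtain ⟨E, hEsub, hcE, hEcard, hEsp⟩ := ih (mem_Ioc.1 hcD'.2).1 hcD'.1
      (hD₀card.trans (card_le_card hD₀sub))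
    have hEc : ∀ e ∈ E, e ≤ c := fun e he => (mem_Ioc.1 (mem_inter.1 (hEsub he)).2).2
    have hbE : b ∉ E := fun h => by have := hEc b h; omega
    refine ⟨insert b E, insert_subset (mem_inter.2 ⟨hb, mem_Ioc.2 ⟨hab, le_rfl⟩⟩) ?_,
      mem_insert_self b E, by rw [card_insert_of_notMem hbE]; omega, ?_⟩
    · exact hEsub.trans (inter_subset_inter_left (Ioc_subset_Ioc_right hcb.le))
    · have hsplit : insert a (insert b E) = insert a E ∪ {b} := by
        rw [union_comm, ← insert_eq, insert_comm]
      rw [hsplit]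
      refine hEsp.union (sparse_pair hcb ?_) (mem_insert_of_mem hcE) (fun x hx => ?_) ?_
      · rw [← hD₁]; exact card_le_card hD₁sub
      · rcases mem_insert.1 hx with rfl | hx
        · exact (mem_Ioc.1 hcD'.2).1.le
        · exact hEc x hx
      · intro x hx; rw [mem_singleton.1 hx]; exact hcb

lemma exists_refinement {X Y : Finset ℕ} {T M : ℕ} (hT : 1 ≤ T) (hM : 1 ≤ M) (hYX : Y ⊆ X)
    (hsp : Sparse X (T * M) Y) :
    ∃ Y', Y ⊆ Y' ∧ Y' ⊆ X ∧ (∀ y ∈ Y', y ≤ fmax Y) ∧ Sparse X T Y' ∧ Sparse Y' M Y := by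
  induction Y using Finset.induction_on_max with
  | empty =>
    exact ⟨∅, subset_rfl, empty_subset _, fun _ h => absurd h (notMem_empty _),
      fun _ _ h => absurd h.1 (notMem_empty _), fun _ _ h => absurd h.1 (notMem_empty _)⟩
  | insert b s hs ih =>
    have hbX : b ∈ X := hYX (mem_insert_self b s)
    rw [fmax_insert_of_lt hs]
    rcases s.eq_empty_or_nonempty with rfl | hsne
    · rw [insert_empty]
      exact ⟨{b}, subset_rfl, singleton_subset_iff.2 hbX, fun y hy => (mem_singleton.1 hy).le,
        sparse_singleton _ _ _, sparse_singleton _ _ _⟩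
    set a := fmax s
    have ha : a ∈ s := fmax_mem hsne
    have hab : a < b := hs a ha
    obtain ⟨s', hss', hs'X, hs'a, hs'sp, hss'sp⟩ := ih ((subset_insert b s).trans hYX)
      fun x z hxz => hsp x z (hxz.insert_of_le_or_le (Or.inr (hs z hxz.2.1).le))
    have hconsec : Consec (insert b s) a b := ⟨mem_insert_of_mem ha, mem_insert_self b s, hab,
      fun y hy => (mem_insert.1 hy).elim (fun h => Or.inr h.ge) fun h => Or.inl (le_fmax h)⟩
    obtain ⟨E, hEsub, hbE, hEcard, hEsp⟩ := exists_sparse_grid hT hM hab hbX (hsp a b hconsec)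
    have hEa : ∀ e ∈ E, a < e ∧ e ≤ b := fun e he => mem_Ioc.1 (mem_inter.1 (hEsub he)).2
    refine ⟨s' ∪ E, insert_subset (mem_union_right _ hbE) (hss'.trans subset_union_left),
      union_subset hs'X (hEsub.trans inter_subset_left), fun y hy => ?_,
      hs'sp.union hEsp (hss' ha) hs'a fun e he => (hEa e he).1, ?_⟩
    · rcases mem_union.1 hy with hy | hy
      · exact (hs'a y hy).trans hab.le
      · exact (hEa y hy).2
    · rw [insert_eq, union_comm {b} s]
      refine (hss'sp.mono_left subset_union_left).union (sparse_pair hab ?_) ha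
        (fun y hy => le_fmax hy) fun y hy => by rw [mem_singleton.1 hy]; exact hab
      exact hEcard.trans (card_le_card fun e he =>
        mem_inter.2 ⟨mem_union_right _ he, (mem_inter.1 (hEsub he)).2⟩)

end Refinement

theorem persistent_of_sparse {d k T : ℕ} (hT : 1 ≤ T) (hkT : k < 2 ^ T) (i : ℕ)
    {X Y : Finset ℕ} (hYX : Y ⊆ X) (hX : 1 ≤ fmin X) (hY : OmegaLarge d Y)
    (hsp : Sparse X (T ^ i) Y) : Persistent d 1 k i X := by
  induction i generalizing X with
  | zero => exact persistent_zero_of_omegaLarge (hY.of_subset hYX hX)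
  | succ i ih =>
    rw [pow_succ'] at hsp
    obtain ⟨Y', hYY', hY'X, -, hY'sp, hYY'sp⟩ :=
      exists_refinement hT (Nat.one_le_pow _ _ hT) hYX hsp
    have hY'ne : Y'.Nonempty := hY.nonempty_s14.mono hYY'
    exact ⟨Y', hY'X, ih hYY' (hX.trans (fmin_le_fmin hY'X hY'ne)) hYY'sp,
      persClause_of_sparse hY'X hY'ne hkT hY'sp⟩

lemma mul_self_le_two_pow_succ (n : ℕ) : n * n ≤ 2 ^ (n + 1) := by
  induction n with
  | zero => simp
  | succ n ih =>
    have : n < 2 ^ n := Nat.lt_two_pow_self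
    rw [pow_succ] at ih
    rw [pow_succ, pow_succ]
    nlinarith

theorem stmt14_general (d k i : ℕ) (X : Finset ℕ)
    (hX : OmegaLarge (2*d + 1) X)
    (hmin : max k (max i 2) < fmin X) :
    Persistent d 1 k i X := by
  have hN : (k + 1) ^ i ≤ 2 ^ 2 ^ fmin X := by
    have hsq := mul_self_le_two_pow_succ (fmin X - 1)
    rw [Nat.sub_add_cancel (by omega)] at hsq
    calc (k + 1) ^ i ≤ (2 ^ k) ^ i := Nat.pow_le_pow_left Nat.lt_two_pow_self i
      _ = 2 ^ (k * i) := (pow_mul 2 k i).symm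
      _ ≤ 2 ^ 2 ^ fmin X :=
        Nat.pow_le_pow_right two_pos ((Nat.mul_le_mul (by omega) (by omega)).trans hsq)
  obtain ⟨Y, hYX, hY, hsp⟩ := exists_sparse_omegaLarge d hX (by omega) hN
  exact persistent_of_sparse (by omega) (Nat.lt_of_succ_lt Nat.lt_two_pow_self) i hYX (by omega)
    hY hsp

/-- If `d > 0`, `X` is ω^{2d+1}-large, and `min X > max{k,i,2}`, then `X` is
`(ω^d, k, i)`-persistent. -/
theorem stmt14 (d k i : ℕ) (hd : 0 < d) (X : Finset ℕ)
    (hX : OmegaLarge (2*d + 1) X)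
    (hmin : max k (max i 2) < fmin X) :
    Persistent d 1 k i X :=
  stmt14_general d k i X hX hmin
end
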